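/- Let d be an odd positive integer, ω = exp(−2πi/d), X, Z the shift and clock matrices on ℂ^d, and 2⁻¹ = (d+1)/2 the inverse of 2 mod d. Let ρ ∈ M_d(ℂ) be Hermitian with Tr(ρ) = 1, φ_ρ(j,l) = Tr(ρ · ω^{2⁻¹ jl} X^j Z^l), and discrete Wigner function μ_ρ(q,p) = (1/d) Σ_{j,l∈ℤ_d} ω^{−(jq+lp)} φ_ρ(j,l) for (q,p) ∈ ℤ_d × ℤ_d. Then ρ is a density matrix (positive semidefinite with unit trace) satisfying μ_ρ(q,p) ≥ 0 for all (q,p) if and only if both of the following d²×d² matrices indexed by ℤ_d × ℤ_d are positive semidefinite: M^Q with entries M^Q_{(j,l),(j',l')} = φ_ρ(j'−j, l'−l) ω^{2⁻¹(j l' − j' l)}, and M^C with entries M^C_{(j,l),(j',l')} = φ_ρ(j'−j, l'−l). -/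

import Mathlib

/-!
With the Weyl operators `D(p) = ω^{2⁻¹ p₁ p₂} X^{p₁} Z^{p₂}` one has
`D(p)ᴴ D(q) = ω^{2⁻¹ (p₁ q₂ - q₁ p₂)} D(q - p)`, so `φ_ρ(p) = Tr(ρ D(p))` turns `M^Q` into
the Gram matrix `(Tr(ρ D(p)ᴴ D(q)))_{p,q}`, whose quadratic form at `x` is `Tr(ρ Aᴴ A)` with
`A = ∑ x_p D(p)`. The `d²` Weyl operators are orthogonal for the trace form, hence span
`M_d(ℂ)`, and taking `Aᴴ A = y yᴴ` shows `M^Q ⪰ 0 ↔ ρ ⪰ 0`.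

`M^C` is the convolution matrix of `φ_ρ` on `ℤ_d²`, and `φ_ρ` is the Fourier transform of
`μ_ρ`. As in Bochner's theorem for finite abelian groups, a convolution matrix is positive
semidefinite iff the Fourier coefficients of its symbol are nonnegative: each character gives
a rank-one positive matrix, and testing the quadratic form on a character extracts its
coefficient.
-/

open Finset Matrix ComplexConjugate
open scoped ComplexOrder

/-- `ω = exp(−2πi/d)`, a primitive `d`-th root of unity for `d > 0`. -/
noncomputable def omega (d : ℕ) : ℂ := Complex.exp (-(2 * Real.pi * Complex.I) / d)

/-- The shift matrix `X` on `ℂ^d`: `X e_k = e_{k+1}` (indices mod `d`). -/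
def shift (d : ℕ) : Matrix (ZMod d) (ZMod d) ℂ :=
  Matrix.of fun m k => if m = k + 1 then 1 else 0

/-- The clock matrix `Z` on `ℂ^d`: `Z e_k = ω^k e_k`. -/
noncomputable def clock (d : ℕ) : Matrix (ZMod d) (ZMod d) ℂ :=
  Matrix.diagonal fun k => omega d ^ k.val

namespace Matrix

variable {ι n : Type*} [Fintype ι] [Fintype n]

def traceGram (ρ : Matrix n n ℂ) (D : ι → Matrix n n ℂ) : Matrix ι ι ℂ :=
  of fun p q => (ρ * ((D p)ᴴ * D q)).trace

lemma dotProduct_mulVec_traceGram (ρ : Matrix n n ℂ) (D : ι → Matrix n n ℂ) (x : ι → ℂ) :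
    star x ⬝ᵥ (traceGram ρ D *ᵥ x) =
      (ρ * ((∑ r, x r • D r)ᴴ * ∑ r, x r • D r)).trace := by
  simp only [conjTranspose_sum, conjTranspose_smul, sum_mul, mul_sum, Matrix.smul_mul,
    Matrix.mul_smul, trace_sum, trace_smul, smul_eq_mul, dotProduct, mulVec, of_apply,
    Pi.star_apply, traceGram]
  rw [sum_comm]
  refine sum_congr rfl fun q _ => sum_congr rfl fun p _ => ?_
  ring

omit [Fintype ι] in
lemma isHermitian_traceGram {ρ : Matrix n n ℂ} (hρ : ρ.IsHermitian) (D : ι → Matrix n n ℂ) :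
    (traceGram ρ D).IsHermitian := by
  ext p q
  rw [conjTranspose_apply, traceGram, of_apply, of_apply, ← trace_conjTranspose,
    conjTranspose_mul, conjTranspose_mul, conjTranspose_conjTranspose, hρ.eq, trace_mul_comm]

lemma PosSemidef.trace_mul_conjTranspose_mul_self_nonneg {ρ : Matrix n n ℂ} (hρ : ρ.PosSemidef)
    (A : Matrix n n ℂ) : 0 ≤ (ρ * (Aᴴ * A)).trace := by
  rw [← Matrix.mul_assoc, trace_mul_comm, ← Matrix.mul_assoc]
  exact (hρ.mul_mul_conjTranspose_same A).trace_nonneg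

lemma exists_conjTranspose_mul_self_eq_vecMulVec [DecidableEq n] (y : n → ℂ) :
    ∃ A : Matrix n n ℂ, Aᴴ * A = vecMulVec y (star y) := by
  rcases isEmpty_or_nonempty n with hn | ⟨⟨i⟩⟩
  · exact ⟨0, Subsingleton.elim _ _⟩
  · refine ⟨vecMulVec (Pi.single i 1) (star y), ?_⟩
    rw [conjTranspose_vecMulVec, star_star, vecMulVec_mul_vecMulVec]
    simp [dotProduct_single]

theorem posSemidef_iff_traceGram_posSemidef [DecidableEq n] {D : ι → Matrix n n ℂ}
    (hD : Submodule.span ℂ (Set.range D) = ⊤) {ρ : Matrix n n ℂ} (hρ : ρ.IsHermitian) :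
    ρ.PosSemidef ↔ (traceGram ρ D).PosSemidef := by
  refine ⟨fun h => .of_dotProduct_mulVec_nonneg (isHermitian_traceGram hρ D) fun x => ?_,
    fun h => .of_dotProduct_mulVec_nonneg hρ fun y => ?_⟩
  · rw [dotProduct_mulVec_traceGram]
    exact h.trace_mul_conjTranspose_mul_self_nonneg _
  · obtain ⟨A, hA⟩ := exists_conjTranspose_mul_self_eq_vecMulVec y
    obtain ⟨x, rfl⟩ :=
      (Submodule.mem_span_range_iff_exists_fun ℂ).mp (hD ▸ Submodule.mem_top (x := A))
    have := h.dotProduct_mulVec_nonneg x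
    rwa [dotProduct_mulVec_traceGram, hA, mul_vecMulVec, trace_vecMulVec,
      dotProduct_comm] at this

lemma linearIndependent_of_trace_conjTranspose_mul [DecidableEq ι] {D : ι → Matrix n n ℂ}
    {c : ℂ} (hc : c ≠ 0) (hD : ∀ p q, ((D p)ᴴ * D q).trace = if p = q then c else 0) :
    LinearIndependent ℂ D := by
  refine Fintype.linearIndependent_iff.mpr fun x hx p => ?_
  have := congrArg (fun A => ((D p)ᴴ * A).trace) hx
  simp only [mul_sum, Matrix.mul_smul, trace_sum, trace_smul, hD, smul_eq_mul, mul_ite,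
    mul_zero, sum_ite_eq, mem_univ, if_true, trace_zero] at this
  exact (mul_eq_zero.mp this).resolve_right hc

end Matrix

namespace AddChar

variable {G ι : Type*} [AddCommGroup G] [Fintype G] [Fintype ι]

lemma posSemidef_of_apply_sub (ψ : AddChar G ℂ) : (of fun p q : G => ψ (q - p)).PosSemidef := by
  convert posSemidef_vecMulVec_star_self (ψ : G → ℂ) using 1
  ext p q
  rw [of_apply, vecMulVec_apply, Pi.star_apply, ← starRingEnd_apply, ← map_neg_eq_conj,
    ← map_add_eq_mul, neg_add_eq_sub]

theorem posSemidef_of_eq_sum_nonneg_mul {f : G → ℂ} (ψ : ι → AddChar G ℂ) {c : ι → ℂ}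
    (hc : ∀ i, 0 ≤ c i) (hf : ∀ s, f s = ∑ i, c i * ψ i s) :
    (of fun p q : G => f (q - p)).PosSemidef := by
  have : (of fun p q : G => f (q - p)) = ∑ i, c i • of fun p q : G => ψ i (q - p) := by
    ext p q
    simp only [of_apply, hf, Matrix.sum_apply, Matrix.smul_apply, smul_eq_mul]
  rw [this]
  exact posSemidef_sum _ fun i _ => (posSemidef_of_apply_sub (ψ i)).smul (hc i)

theorem sum_neg_mul_nonneg_of_posSemidef {f : G → ℂ}
    (hf : (of fun p q : G => f (q - p)).PosSemidef) (ψ : AddChar G ℂ) : 0 ≤ ∑ s, ψ (-s) * f s := by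
  have key : star (fun q => ψ (-q)) ⬝ᵥ (of (fun p q : G => f (q - p)) *ᵥ fun q => ψ (-q)) =
      ∑ _p : G, ∑ s, ψ (-s) * f s := by
    simp only [dotProduct, mulVec, of_apply, Pi.star_apply, mul_sum]
    refine sum_congr rfl fun p _ => ?_
    refine (Fintype.sum_equiv (Equiv.addLeft p) _ _ fun s => ?_).symm
    have h : ψ p * ψ (-(p + s)) = ψ (-s) := by
      rw [← map_add_eq_mul]
      congr 1
      abel
    rw [Equiv.coe_addLeft, add_sub_cancel_left, ← starRingEnd_apply, ← map_neg_eq_conj, neg_neg]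
    linear_combination -(f s) * h
  have := hf.dotProduct_mulVec_nonneg fun q => ψ (-q)
  rw [key, sum_const, card_univ, nsmul_eq_mul] at this
  have := mul_nonneg (inv_nonneg.mpr (Nat.cast_nonneg (Fintype.card G) : (0 : ℂ) ≤ _)) this
  rwa [inv_mul_cancel_left₀ (Nat.cast_ne_zero.mpr Fintype.card_ne_zero)] at this

end AddChar

section Weyl

variable {d : ℕ} [NeZero d]

lemma isPrimitiveRoot_omega : IsPrimitiveRoot (omega d) d := by
  have : omega d = (Complex.exp (2 * Real.pi * Complex.I / d))⁻¹ := by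
    rw [← Complex.exp_neg, omega, neg_div]
  rw [this]
  exact (Complex.isPrimitiveRoot_exp d (NeZero.ne d)).inv

variable (d) in
noncomputable def omegaChar : AddChar (ZMod d) ℂ :=
  AddChar.zmodChar d isPrimitiveRoot_omega.pow_eq_one

lemma omegaChar_apply (z : ZMod d) : omegaChar d z = omega d ^ z.val := rfl

lemma isPrimitive_omegaChar : (omegaChar d).IsPrimitive :=
  AddChar.zmodChar_primitive_of_primitive_root d isPrimitiveRoot_omega

lemma sum_omegaChar_mul (a : ZMod d) :
    ∑ k : ZMod d, omegaChar d (k * a) = if a = 0 then (d : ℂ) else 0 := by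
  rw [AddChar.sum_mulShift a isPrimitive_omegaChar, ZMod.card, apply_ite Nat.cast, Nat.cast_zero]

variable (d) in
noncomputable def phaseChar (w : ZMod d × ZMod d) : AddChar (ZMod d × ZMod d) ℂ where
  toFun s := omegaChar d (s.1 * w.1 + s.2 * w.2)
  map_zero_eq_one' := by simp
  map_add_eq_mul' s t := by
    rw [← AddChar.map_add_eq_mul]
    congr 1
    simp only [Prod.fst_add, Prod.snd_add]
    ring

lemma phaseChar_apply (w s : ZMod d × ZMod d) :
    phaseChar d w s = omegaChar d (s.1 * w.1 + s.2 * w.2) := rfl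

lemma sum_phaseChar_apply (s : ZMod d × ZMod d) :
    ∑ w, phaseChar d w s = if s = 0 then (d : ℂ) ^ 2 else 0 := by
  simp only [phaseChar_apply, Fintype.sum_prod_type, AddChar.map_add_eq_mul, ← sum_mul_sum]
  simp_rw [mul_comm s.1, mul_comm s.2, sum_omegaChar_mul, Prod.ext_iff, Prod.fst_zero,
    Prod.snd_zero]
  split_ifs <;> simp_all [sq]

lemma sum_phaseChar_mul_sum_phaseChar_neg (f : ZMod d × ZMod d → ℂ) (s : ZMod d × ZMod d) :
    ∑ w, phaseChar d w s * ∑ t, phaseChar d w (-t) * f t = (d : ℂ) ^ 2 * f s := by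
  simp_rw [mul_sum, ← mul_assoc, ← AddChar.map_add_eq_mul, ← sub_eq_add_neg]
  rw [sum_comm]
  simp_rw [← sum_mul, sum_phaseChar_apply, sub_eq_zero, ite_mul, zero_mul, sum_ite_eq,
    mem_univ, if_true]

variable (d) in
def zmodHalf : ZMod d := ((d + 1) / 2 : ℕ)

lemma two_mul_zmodHalf (hd : Odd d) : 2 * zmodHalf d = 1 := by
  obtain ⟨k, rfl⟩ := hd
  have hk : (2 * k + 1 + 1) / 2 = k + 1 := by omega
  have hzero := ZMod.natCast_self (2 * k + 1)
  rw [zmodHalf, hk]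
  push_cast at hzero ⊢
  linear_combination hzero

lemma shift_pow_apply (n : ℕ) (m k : ZMod d) :
    (shift d ^ n) m k = if m = k + n then 1 else 0 := by
  induction n generalizing m with
  | zero => simp [one_apply, eq_comm]
  | succ n ih =>
    rw [pow_succ', mul_apply, Fintype.sum_eq_single (m - 1), ih]
    · simp only [shift, of_apply, sub_add_cancel, if_true, one_mul, Nat.cast_succ]
      simp only [sub_eq_iff_eq_add, add_assoc]
    · intro j hj
      simp only [shift, of_apply]
      rw [if_neg fun h => hj (by rw [h]; ring), zero_mul]

lemma clock_pow (n : ℕ) : clock d ^ n = diagonal fun k => omegaChar d (n * k) := by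
  rw [clock, diagonal_pow]
  congr 1
  ext k
  rw [Pi.pow_apply, ← omegaChar_apply, ← AddChar.map_nsmul_eq_pow, nsmul_eq_mul]

variable (d) in
noncomputable def weyl (p : ZMod d × ZMod d) : Matrix (ZMod d) (ZMod d) ℂ :=
  omega d ^ (zmodHalf d * p.1 * p.2).val • (shift d ^ p.1.val * clock d ^ p.2.val)

lemma weyl_apply (p : ZMod d × ZMod d) (m k : ZMod d) :
    weyl d p m k =
      if m = k + p.1 then omegaChar d (zmodHalf d * p.1 * p.2 + p.2 * k) else 0 := by
  rw [weyl, Matrix.smul_apply, clock_pow, mul_diagonal, shift_pow_apply, ← omegaChar_apply,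
    ZMod.natCast_zmod_val, ZMod.natCast_zmod_val, AddChar.map_add_eq_mul]
  split_ifs <;> simp

lemma weyl_mul (hd : Odd d) (p q : ZMod d × ZMod d) :
    weyl d p * weyl d q =
      omegaChar d (zmodHalf d * (p.2 * q.1 - p.1 * q.2)) • weyl d (p + q) := by
  ext m k
  rw [mul_apply, Fintype.sum_eq_single (k + q.1)]
  · simp only [weyl_apply, Matrix.smul_apply, Prod.fst_add, Prod.snd_add, add_assoc,
      add_comm q.1, if_true, smul_eq_mul]
    split_ifs
    · rw [← AddChar.map_add_eq_mul, ← AddChar.map_add_eq_mul]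
      congr 1
      linear_combination (-(p.2 * q.1)) * two_mul_zmodHalf hd
    · simp
  · intro j hj
    rw [weyl_apply q, if_neg hj, mul_zero]

lemma conjTranspose_weyl (hd : Odd d) (p : ZMod d × ZMod d) : (weyl d p)ᴴ = weyl d (-p) := by
  ext m k
  rw [conjTranspose_apply, weyl_apply, weyl_apply, Prod.fst_neg, Prod.snd_neg]
  by_cases h : k = m + p.1
  · rw [if_pos h, if_pos (by rw [h]; ring), ← starRingEnd_apply, ← AddChar.map_neg_eq_conj]
    congr 1
    rw [h]
    linear_combination (-(p.1 * p.2)) * two_mul_zmodHalf hd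
  · rw [if_neg h, if_neg fun h' => h (by rw [h']; ring), star_zero]

lemma conjTranspose_weyl_mul_weyl (hd : Odd d) (p q : ZMod d × ZMod d) :
    (weyl d p)ᴴ * weyl d q =
      omegaChar d (zmodHalf d * (p.1 * q.2 - q.1 * p.2)) • weyl d (q - p) := by
  rw [conjTranspose_weyl hd, weyl_mul hd, neg_add_eq_sub, Prod.fst_neg, Prod.snd_neg]
  congr 3
  ring

lemma trace_weyl (s : ZMod d × ZMod d) : (weyl d s).trace = if s = 0 then (d : ℂ) else 0 := by
  simp only [trace, diag_apply, weyl_apply]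
  by_cases h : s.1 = 0
  · simp only [h, add_zero, if_true, mul_zero, zero_mul, zero_add]
    simp_rw [mul_comm s.2, sum_omegaChar_mul]
    simp [Prod.ext_iff, h]
  · have hk (k : ZMod d) : ¬k = k + s.1 := fun hk => h (by linear_combination -hk)
    simp [hk, h, Prod.ext_iff]

lemma trace_conjTranspose_weyl_mul_weyl (hd : Odd d) (p q : ZMod d × ZMod d) :
    ((weyl d p)ᴴ * weyl d q).trace = if p = q then (d : ℂ) else 0 := by
  rw [conjTranspose_weyl_mul_weyl hd, trace_smul, trace_weyl, smul_eq_mul]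
  simp only [sub_eq_zero, eq_comm (a := q)]
  split_ifs with h
  · simp [h]
  · rw [mul_zero]

lemma span_weyl_eq_top (hd : Odd d) : Submodule.span ℂ (Set.range (weyl d)) = ⊤ := by
  refine (linearIndependent_of_trace_conjTranspose_mul (Nat.cast_ne_zero.mpr (NeZero.ne d))
    fun p q => ?_).span_eq_top_of_card_eq_finrank' ?_
  · rw [trace_conjTranspose_weyl_mul_weyl hd]
  · simp [Module.finrank_matrix]

end Weyl

theorem densityMatrix_posWigner_iff_general (d : ℕ) [NeZero d] (hd : Odd d)
    (ρ : Matrix (ZMod d) (ZMod d) ℂ) (hρ : ρ.IsHermitian)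
    (φ : ZMod d × ZMod d → ℂ)
    (hφ : ∀ p : ZMod d × ZMod d,
      φ p = (ρ * (omega d ^ ((((d + 1) / 2 : ℕ) : ZMod d) * p.1 * p.2).val •
        (shift d ^ (p.1).val * clock d ^ (p.2).val))).trace)
    (μ : ZMod d × ZMod d → ℂ)
    (hμ : ∀ qp : ZMod d × ZMod d,
      μ qp = (1 / (d : ℂ)) *
        ∑ j : ZMod d, ∑ l : ZMod d,
          omega d ^ (-(j * qp.1 + l * qp.2)).val * φ (j, l)) :
    (ρ.PosSemidef ∧ ∀ qp : ZMod d × ZMod d, 0 ≤ μ qp) ↔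
      ((Matrix.of fun p q : ZMod d × ZMod d =>
          φ (q - p) *
            omega d ^ ((((d + 1) / 2 : ℕ) : ZMod d) * (p.1 * q.2 - q.1 * p.2)).val).PosSemidef ∧
        (Matrix.of fun p q : ZMod d × ZMod d => φ (q - p)).PosSemidef) := by
  have hφ' (p : ZMod d × ZMod d) : φ p = (ρ * weyl d p).trace := hφ p
  have hμ' (w : ZMod d × ZMod d) : μ w = 1 / d * ∑ s, phaseChar d w (-s) * φ s := by
    simp only [hμ, Fintype.sum_prod_type, phaseChar_apply, omegaChar_apply, Prod.fst_neg,
      Prod.snd_neg, neg_mul, neg_add]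
  have hφμ (s : ZMod d × ZMod d) : φ s = ∑ w, μ w / d * phaseChar d w s := by
    have hd0 : (d : ℂ) ≠ 0 := Nat.cast_ne_zero.mpr (NeZero.ne d)
    rw [← mul_right_inj' (pow_ne_zero 2 hd0), ← sum_phaseChar_mul_sum_phaseChar_neg φ s,
      mul_sum]
    refine sum_congr rfl fun w _ => ?_
    rw [hμ']
    field_simp
  have hMQ : (of fun p q : ZMod d × ZMod d => φ (q - p) *
      omega d ^ ((((d + 1) / 2 : ℕ) : ZMod d) * (p.1 * q.2 - q.1 * p.2)).val) =
      traceGram ρ (weyl d) := by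
    ext p q
    rw [traceGram, of_apply, of_apply, conjTranspose_weyl_mul_weyl hd, Matrix.mul_smul,
      trace_smul, smul_eq_mul, ← hφ', mul_comm]
    rfl
  rw [hMQ, ← posSemidef_iff_traceGram_posSemidef (span_weyl_eq_top hd) hρ]
  refine and_congr_right fun _ => ⟨fun hμ0 => ?_, fun hC w => ?_⟩
  · exact AddChar.posSemidef_of_eq_sum_nonneg_mul (phaseChar d)
      (fun w => div_nonneg (hμ0 w) (Nat.cast_nonneg d)) hφμ
  · rw [hμ']
    exact mul_nonneg (one_div_nonneg.mpr (Nat.cast_nonneg d))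
      (AddChar.sum_neg_mul_nonneg_of_posSemidef hC _)

/-- **Quantum Bochner's theorem for the discrete Wigner function.**
For odd `d` and a Hermitian `ρ` with `Tr ρ = 1`, characteristic function
`φ_ρ(j,l) = Tr(ρ ω^{2⁻¹ jl} X^j Z^l)` and discrete Wigner function
`μ_ρ(q,p) = (1/d) ∑_{j,l} ω^{−(jq+lp)} φ_ρ(j,l)`: `ρ` is a density matrix with nonnegative
Wigner function iff both `M^Q_{(j,l),(j',l')} = φ_ρ(j'−j,l'−l) ω^{2⁻¹(jl'−j'l)}` and
`M^C_{(j,l),(j',l')} = φ_ρ(j'−j,l'−l)` are positive semidefinite. -/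
theorem densityMatrix_posWigner_iff (d : ℕ) [NeZero d] (hd : Odd d)
    (ρ : Matrix (ZMod d) (ZMod d) ℂ) (hρ : ρ.IsHermitian) (htr : ρ.trace = 1)
    (φ : ZMod d × ZMod d → ℂ)
    (hφ : ∀ p : ZMod d × ZMod d,
      φ p = (ρ * (omega d ^ ((((d + 1) / 2 : ℕ) : ZMod d) * p.1 * p.2).val •
        (shift d ^ (p.1).val * clock d ^ (p.2).val))).trace)
    (μ : ZMod d × ZMod d → ℂ)
    (hμ : ∀ qp : ZMod d × ZMod d,
      μ qp = (1 / (d : ℂ)) *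
        ∑ j : ZMod d, ∑ l : ZMod d,
          omega d ^ (-(j * qp.1 + l * qp.2)).val * φ (j, l)) :
    (ρ.PosSemidef ∧ ∀ qp : ZMod d × ZMod d, 0 ≤ μ qp) ↔
      ((Matrix.of fun p q : ZMod d × ZMod d =>
          φ (q - p) *
            omega d ^ ((((d + 1) / 2 : ℕ) : ZMod d) * (p.1 * q.2 - q.1 * p.2)).val).PosSemidef ∧
        (Matrix.of fun p q : ZMod d × ZMod d => φ (q - p)).PosSemidef) :=
  densityMatrix_posWigner_iff_general d hd ρ hρ φ hφ μ hμ
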